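/- arXiv:1009.5094 — 13 statements merged into one kernel-verified Lean document; each statement's English description precedes it below -/
import Mathlib

section
/- Let μ : ℝ → ℝ be twice differentiable with μ'(s) > 0 and μ''(s) ≤ 0 for all s ≥ 0, and let α > 0, T > 0 and S₀ > 0. Then the function f(s) = s + (S₀ − s)·exp(−α·μ(s)·T) is strictly convex on the interval (0, S₀); indeed its second derivative equals [2μ'(s) + (α·μ'(s)²·T − μ''(s))(S₀ − s)]·α·T·exp(−α·μ(s)·T), which is strictly positive on (0, S₀). -/
open Set
open Real

section BatchProfile

variable {μ μ' μ'' : ℝ → ℝ} {α T S₀ : ℝ}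

lemma hasDerivAt_add_sub_mul_exp (hd1 : ∀ s, HasDerivAt μ (μ' s) s) (s : ℝ) :
    HasDerivAt (fun s => s + (S₀ - s) * exp (-(α * μ s * T)))
      (1 - exp (-(α * μ s * T)) * (1 + (S₀ - s) * (α * μ' s * T))) s := by
  have hexp := (((hd1 s).const_mul α).mul_const T).fun_neg.exp
  refine ((hasDerivAt_id' s).fun_add
    (((hasDerivAt_id' s).const_sub S₀).fun_mul hexp)).congr_deriv ?_
  ring

lemma hasDerivAt_one_sub_exp_mul (hd1 : ∀ s, HasDerivAt μ (μ' s) s)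
    (hd2 : ∀ s, HasDerivAt μ' (μ'' s) s) (s : ℝ) :
    HasDerivAt (fun s => 1 - exp (-(α * μ s * T)) * (1 + (S₀ - s) * (α * μ' s * T)))
      ((2 * μ' s + (α * μ' s ^ 2 * T - μ'' s) * (S₀ - s)) * (α * T) *
        exp (-(α * μ s * T))) s := by
  have hexp := (((hd1 s).const_mul α).mul_const T).fun_neg.exp
  have hlin := (((hasDerivAt_id' s).const_sub S₀).fun_mul
    (((hd2 s).const_mul α).mul_const T)).const_add 1
  refine ((hexp.fun_mul hlin).const_sub 1).congr_deriv ?_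
  ring

lemma deriv_deriv_add_sub_mul_exp (hd1 : ∀ s, HasDerivAt μ (μ' s) s)
    (hd2 : ∀ s, HasDerivAt μ' (μ'' s) s) (s : ℝ) :
    deriv (deriv fun s => s + (S₀ - s) * exp (-(α * μ s * T))) s =
      (2 * μ' s + (α * μ' s ^ 2 * T - μ'' s) * (S₀ - s)) * (α * T) *
        exp (-(α * μ s * T)) := by
  have hderiv : deriv (fun s => s + (S₀ - s) * exp (-(α * μ s * T))) =
      fun s => 1 - exp (-(α * μ s * T)) * (1 + (S₀ - s) * (α * μ' s * T)) :=
    funext fun s => (hasDerivAt_add_sub_mul_exp hd1 s).deriv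
  rw [hderiv]
  exact (hasDerivAt_one_sub_exp_mul hd1 hd2 s).deriv

end BatchProfile

lemma secondDeriv_formula_pos {m₁ m₂ α T d : ℝ} (hm₁ : 0 < m₁) (hm₂ : m₂ ≤ 0)
    (hα : 0 < α) (hT : 0 < T) (hd : 0 < d) (x : ℝ) :
    0 < (2 * m₁ + (α * m₁ ^ 2 * T - m₂) * d) * (α * T) * exp x := by
  have hbracket : 0 ≤ α * m₁ ^ 2 * T - m₂ := by
    have : 0 ≤ α * m₁ ^ 2 * T := by positivity
    linarith
  positivity

theorem stmt_2_general (μ μ' μ'' : ℝ → ℝ)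
    (hd1 : ∀ s, HasDerivAt μ (μ' s) s)
    (hd2 : ∀ s, HasDerivAt μ' (μ'' s) s)
    (hμ' : ∀ s ≥ (0 : ℝ), 0 < μ' s)
    (hμ'' : ∀ s ≥ (0 : ℝ), μ'' s ≤ 0)
    (α T S₀ : ℝ) (hα : 0 < α) (hT : 0 < T)
    (f : ℝ → ℝ)
    (hf : f = fun s => s + (S₀ - s) * Real.exp (-(α * μ s * T))) :
    StrictConvexOn ℝ (Ioo 0 S₀) f ∧
    ∀ s ∈ Ioo 0 S₀,
      deriv (deriv f) s =
        (2 * μ' s + (α * (μ' s) ^ 2 * T - μ'' s) * (S₀ - s)) * (α * T) *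
          Real.exp (-(α * μ s * T)) ∧
      0 < deriv (deriv f) s := by
  subst hf
  have hpos : ∀ s ∈ Ioo 0 S₀,
      0 < deriv (deriv fun s => s + (S₀ - s) * exp (-(α * μ s * T))) s := fun s hs =>
    deriv_deriv_add_sub_mul_exp hd1 hd2 s ▸
      secondDeriv_formula_pos (hμ' s hs.1.le) (hμ'' s hs.1.le) hα hT (sub_pos.2 hs.2) _
  refine ⟨strictConvexOn_of_deriv2_pos' (convex_Ioo 0 S₀) ?_ ?_,
    fun s hs => ⟨deriv_deriv_add_sub_mul_exp hd1 hd2 s, hpos s hs⟩⟩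
  · exact HasDerivAt.continuousOn fun s _ => hasDerivAt_add_sub_mul_exp hd1 s
  · simpa only [Function.iterate_succ, Function.iterate_zero, Function.comp_apply,
      Function.id_comp] using hpos

/-- Strict convexity of `s ↦ S_l(T) = s + (S₀ - s) exp(-α μ(s) T)` on `(0, S₀)`,
with the explicit formula for its second derivative. -/
theorem stmt_2 (μ μ' μ'' : ℝ → ℝ)
    (hd1 : ∀ s, HasDerivAt μ (μ' s) s)
    (hd2 : ∀ s, HasDerivAt μ' (μ'' s) s)
    (hμ' : ∀ s ≥ (0 : ℝ), 0 < μ' s)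
    (hμ'' : ∀ s ≥ (0 : ℝ), μ'' s ≤ 0)
    (α T S₀ : ℝ) (hα : 0 < α) (hT : 0 < T) (hS₀ : 0 < S₀)
    (f : ℝ → ℝ)
    (hf : f = fun s => s + (S₀ - s) * Real.exp (-(α * μ s * T))) :
    StrictConvexOn ℝ (Ioo 0 S₀) f ∧
    ∀ s ∈ Ioo 0 S₀,
      deriv (deriv f) s =
        (2 * μ' s + (α * (μ' s) ^ 2 * T - μ'' s) * (S₀ - s)) * (α * T) *
          Real.exp (-(α * μ s * T)) ∧
      0 < deriv (deriv f) s :=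
  stmt_2_general μ μ' μ'' hd1 hd2 hμ' hμ'' α T S₀ hα hT f hf
end

section
/- Let μ : ℝ → ℝ be twice differentiable with μ(0) = 0, μ'(s) > 0 and μ''(s) ≤ 0 for all s ≥ 0 (Assumption A1), let α > 0 and 0 < S̲ < S₀. Then the function T_f(s) = ln((S₀ − s)/(S̲ − s)) / (α·μ(s)) has a unique minimizer on the interval (0, S̲). -/
/-!
Write `T_f = L / (α μ)` with `L s = log ((S₀ - s) / (S̲ - s)) > 0` on `(0, S̲)`. Since `μ` vanishes
at `0` and `L` blows up at `S̲`, `T_f → +∞` at both ends of the interval, so `T_f` attains its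
minimum there. At an interior minimizer `T_f' = 0`, i.e. the numerator `L' μ - L μ'` of `T_f'`
vanishes; this numerator has derivative `L'' μ - L μ'' > 0` because `L'' > 0`, `μ > 0` and
`μ'' ≤ 0`, so it vanishes at most once.
-/

open Set Filter Topology

theorem exists_isMinOn_Ioo_of_tendsto_atTop {α β : Type*} [ConditionallyCompleteLinearOrder α]
    [TopologicalSpace α] [OrderTopology α] [DenselyOrdered α] [LinearOrder β] [TopologicalSpace β]
    [ClosedIicTopology β] [NoMaxOrder β] {f : α → β} {a b : α} (hab : a < b)
    (hf : ContinuousOn f (Ioo a b)) (ha : Tendsto f (𝓝[>] a) atTop)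
    (hb : Tendsto f (𝓝[<] b) atTop) : ∃ x ∈ Ioo a b, IsMinOn f (Ioo a b) x := by
  obtain ⟨c, hac, hcb⟩ := exists_between hab
  obtain ⟨a', ⟨haa', ha'c⟩, hleft⟩ :=
    (mem_nhdsGT_iff_exists_mem_Ioc_Ioo_subset hac).1 (ha.eventually_gt_atTop (f c))
  obtain ⟨b', ⟨hcb', hb'b⟩, hright⟩ :=
    (mem_nhdsLT_iff_exists_mem_Ico_Ioo_subset hcb).1 (hb.eventually_gt_atTop (f c))
  have hsub : Icc a' b' ⊆ Ioo a b := Icc_subset_Ioo haa' hb'b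
  obtain ⟨x, hx, hmin⟩ := isCompact_Icc.exists_isMinOn ⟨c, ha'c, hcb'⟩ (hf.mono hsub)
  refine ⟨x, hsub hx, fun s hs => ?_⟩
  rcases lt_or_ge s a' with hsa' | hsa'
  · exact (hmin ⟨ha'c, hcb'⟩).trans (hleft ⟨hs.1, hsa'⟩).le
  rcases le_or_gt s b' with hsb' | hsb'
  · exact hmin ⟨hsa', hsb'⟩
  · exact (hmin ⟨ha'c, hcb'⟩).trans (hright ⟨hsb', hs.2⟩).le

noncomputable def logRatio (S₀ Sbar s : ℝ) : ℝ := Real.log ((S₀ - s) / (Sbar - s))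

section LogRatio

variable {S₀ Sbar s : ℝ}

lemma logRatio_pos (hs : s < Sbar) (hS₀ : Sbar < S₀) : 0 < logRatio S₀ Sbar s :=
  Real.log_pos ((one_lt_div (sub_pos.2 hs)).2 (by linarith))

lemma hasDerivAt_logRatio (hs : s ≠ Sbar) (hs₀ : s ≠ S₀) :
    HasDerivAt (logRatio S₀ Sbar) ((Sbar - s)⁻¹ - (S₀ - s)⁻¹) s := by
  have h : Sbar - s ≠ 0 := sub_ne_zero.2 hs.symm
  have h₀ : S₀ - s ≠ 0 := sub_ne_zero.2 hs₀.symm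
  convert (((hasDerivAt_id' s).const_sub S₀).div ((hasDerivAt_id' s).const_sub Sbar) h).log
    (div_ne_zero h₀ h) using 1
  · rfl
  · simp only [Pi.div_apply]
    field_simp
    ring

lemma tendsto_logRatio_nhdsLT (hS₀ : Sbar < S₀) :
    Tendsto (logRatio S₀ Sbar) (𝓝[<] Sbar) atTop := by
  have hgap : Tendsto (fun s => Sbar - s) (𝓝[<] Sbar) (𝓝[>] 0) := by
    have h : Tendsto (fun s => Sbar - s) (𝓝 Sbar) (𝓝 (Sbar - Sbar)) :=
      tendsto_const_nhds.sub tendsto_id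
    rw [sub_self] at h
    exact tendsto_nhdsWithin_iff.2 ⟨h.mono_left nhdsWithin_le_nhds,
      eventually_nhdsWithin_of_forall fun _ hs => sub_pos.2 (mem_Iio.1 hs)⟩
  have hnum : Tendsto (fun s => S₀ - s) (𝓝[<] Sbar) (𝓝 (S₀ - Sbar)) :=
    (tendsto_const_nhds.sub tendsto_id).mono_left nhdsWithin_le_nhds
  exact Real.tendsto_log_atTop.comp
    (hnum.pos_mul_atTop (sub_pos.2 hS₀) hgap.inv_tendsto_nhdsGT_zero)

end LogRatio

/-- The derivative of `s ↦ logRatio S₀ Sbar s / (α * μ s)` is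
`α * critNumerator μ μ' S₀ Sbar s / (α * μ s) ^ 2`. -/
noncomputable def critNumerator (μ μ' : ℝ → ℝ) (S₀ Sbar s : ℝ) : ℝ :=
  ((Sbar - s)⁻¹ - (S₀ - s)⁻¹) * μ s - logRatio S₀ Sbar s * μ' s

section CritNumerator

variable {μ μ' μ'' : ℝ → ℝ} {α S₀ Sbar s : ℝ}

lemma hasDerivAt_critNumerator (hμ : HasDerivAt μ (μ' s) s) (hμ' : HasDerivAt μ' (μ'' s) s)
    (hs : s ≠ Sbar) (hs₀ : s ≠ S₀) :
    HasDerivAt (critNumerator μ μ' S₀ Sbar)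
      ((((Sbar - s) ^ 2)⁻¹ - ((S₀ - s) ^ 2)⁻¹) * μ s - logRatio S₀ Sbar s * μ'' s) s := by
  have h : Sbar - s ≠ 0 := sub_ne_zero.2 hs.symm
  have h₀ : S₀ - s ≠ 0 := sub_ne_zero.2 hs₀.symm
  have hinv := (((hasDerivAt_id' s).const_sub Sbar).inv h).sub
    (((hasDerivAt_id' s).const_sub S₀).inv h₀)
  refine ((hinv.mul hμ).sub ((hasDerivAt_logRatio hs hs₀).mul hμ')).congr_deriv ?_
  simp only [Pi.sub_apply, Pi.inv_apply]
  field_simp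
  ring

lemma strictMonoOn_critNumerator {a : ℝ} (hμ : ∀ s, HasDerivAt μ (μ' s) s)
    (hμ' : ∀ s, HasDerivAt μ' (μ'' s) s) (hμpos : ∀ s ∈ Ioo a Sbar, 0 < μ s)
    (hμ'' : ∀ s ∈ Ioo a Sbar, μ'' s ≤ 0) (hS₀ : Sbar < S₀) :
    StrictMonoOn (critNumerator μ μ' S₀ Sbar) (Ioo a Sbar) := by
  have hderiv : ∀ s ∈ Ioo a Sbar, HasDerivAt (critNumerator μ μ' S₀ Sbar)
      ((((Sbar - s) ^ 2)⁻¹ - ((S₀ - s) ^ 2)⁻¹) * μ s - logRatio S₀ Sbar s * μ'' s) s :=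
    fun s hs => hasDerivAt_critNumerator (hμ s) (hμ' s) hs.2.ne (hs.2.trans hS₀).ne
  refine strictMonoOn_of_deriv_pos (convex_Ioo a Sbar)
    (fun s hs => (hderiv s hs).continuousAt.continuousWithinAt) fun s hs => ?_
  rw [interior_Ioo] at hs
  rw [(hderiv s hs).deriv]
  have hgap : 0 < Sbar - s := sub_pos.2 hs.2
  have hsq : ((S₀ - s) ^ 2)⁻¹ < ((Sbar - s) ^ 2)⁻¹ :=
    inv_strictAnti₀ (by positivity) (pow_lt_pow_left₀ (by linarith) hgap.le two_ne_zero)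
  have hconc : logRatio S₀ Sbar s * μ'' s ≤ 0 :=
    mul_nonpos_of_nonneg_of_nonpos (logRatio_pos hs.2 hS₀).le (hμ'' s hs)
  nlinarith [mul_pos (sub_pos.2 hsq) (hμpos s hs)]

lemma critNumerator_eq_zero_of_isLocalMin (hμ : HasDerivAt μ (μ' s) s) (hα : α ≠ 0)
    (hμs : μ s ≠ 0) (hs : s ≠ Sbar) (hs₀ : s ≠ S₀)
    (hmin : IsLocalMin (fun x => logRatio S₀ Sbar x / (α * μ x)) s) :
    critNumerator μ μ' S₀ Sbar s = 0 := by
  have h := hmin.hasDerivAt_eq_zero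
    ((hasDerivAt_logRatio hs hs₀).div (hμ.const_mul α) (mul_ne_zero hα hμs))
  rw [div_eq_zero_iff, or_iff_left (pow_ne_zero 2 (mul_ne_zero hα hμs))] at h
  refine (mul_eq_zero.1 ?_).resolve_left hα
  rw [← h, critNumerator]
  ring

end CritNumerator

section HittingTime

variable {μ : ℝ → ℝ} {α a S₀ Sbar : ℝ}

lemma tendsto_logRatio_div_nhdsGT (hμ : Tendsto μ (𝓝[>] a) (𝓝[>] 0)) (hα : 0 < α)
    (ha : a < Sbar) (hS₀ : Sbar < S₀) :
    Tendsto (fun s => logRatio S₀ Sbar s / (α * μ s)) (𝓝[>] a) atTop := by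
  have hlog : Tendsto (fun s => α⁻¹ * logRatio S₀ Sbar s) (𝓝[>] a)
      (𝓝 (α⁻¹ * logRatio S₀ Sbar a)) :=
    ((hasDerivAt_logRatio ha.ne (ha.trans hS₀).ne).continuousAt.tendsto.const_mul _).mono_left
      nhdsWithin_le_nhds
  refine (hlog.pos_mul_atTop (mul_pos (inv_pos.2 hα) (logRatio_pos ha hS₀))
    hμ.inv_tendsto_nhdsGT_zero).congr fun s => ?_
  simp only [Pi.inv_apply]
  ring

lemma tendsto_logRatio_div_nhdsLT (hμ : Tendsto μ (𝓝[<] Sbar) (𝓝 (μ Sbar)))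
    (hμS : 0 < μ Sbar) (hα : 0 < α) (hS₀ : Sbar < S₀) :
    Tendsto (fun s => logRatio S₀ Sbar s / (α * μ s)) (𝓝[<] Sbar) atTop := by
  have hpos : 0 < α * μ Sbar := mul_pos hα hμS
  exact (tendsto_logRatio_nhdsLT hS₀).atTop_mul_pos (inv_pos.2 hpos)
    ((hμ.const_mul α).inv₀ hpos.ne')

end HittingTime

/-- Proposition 1: under Assumption A1, the hitting time `T_f` has a unique
minimizer on `(0, S̲)`. -/
theorem stmt_3 (μ μ' μ'' : ℝ → ℝ)
    (hd1 : ∀ s, HasDerivAt μ (μ' s) s)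
    (hd2 : ∀ s, HasDerivAt μ' (μ'' s) s)
    (hμ0 : μ 0 = 0)
    (hμ' : ∀ s ≥ (0 : ℝ), 0 < μ' s)
    (hμ'' : ∀ s ≥ (0 : ℝ), μ'' s ≤ 0)
    (α Sbar S₀ : ℝ) (hα : 0 < α) (hSbar : 0 < Sbar) (hS₀ : Sbar < S₀)
    (Tf : ℝ → ℝ)
    (hTf : ∀ s, Tf s = Real.log ((S₀ - s) / (Sbar - s)) / (α * μ s)) :
    ∃! s' : ℝ, s' ∈ Ioo 0 Sbar ∧ ∀ s ∈ Ioo 0 Sbar, Tf s' ≤ Tf s := by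
  obtain rfl : Tf = fun s => logRatio S₀ Sbar s / (α * μ s) := funext hTf
  have hμcont : Continuous μ := continuous_iff_continuousAt.2 fun s => (hd1 s).continuousAt
  have hμmono : StrictMonoOn μ (Ici 0) := strictMonoOn_of_deriv_pos (convex_Ici 0)
    hμcont.continuousOn fun x hx => (hd1 x).deriv ▸ hμ' x (interior_Ici.subset hx).le
  have hμpos : ∀ s > 0, 0 < μ s := fun s hs => hμ0 ▸ hμmono self_mem_Ici hs.le hs
  have hcrit : ∀ y ∈ Ioo 0 Sbar, IsMinOn (fun s => logRatio S₀ Sbar s / (α * μ s)) (Ioo 0 Sbar) y →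
      critNumerator μ μ' S₀ Sbar y = 0 := fun y hy hmin =>
    critNumerator_eq_zero_of_isLocalMin (hd1 y) hα.ne' (hμpos y hy.1).ne' hy.2.ne
      (hy.2.trans hS₀).ne (hmin.isLocalMin (Ioo_mem_nhds hy.1 hy.2))
  have hcont : ContinuousOn (fun s => logRatio S₀ Sbar s / (α * μ s)) (Ioo 0 Sbar) :=
    fun s hs => ((hasDerivAt_logRatio hs.2.ne (hs.2.trans hS₀).ne).continuousAt.div
      (hμcont.continuousAt.const_mul α) (mul_pos hα (hμpos s hs.1)).ne').continuousWithinAt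
  have hμ0' : Tendsto μ (𝓝[>] 0) (𝓝[>] 0) := by
    refine tendsto_nhdsWithin_iff.2 ⟨?_, eventually_nhdsWithin_of_forall hμpos⟩
    simpa only [hμ0] using (hμcont.continuousWithinAt (s := Ioi 0) (x := 0)).tendsto
  obtain ⟨x, hx, hmin⟩ := exists_isMinOn_Ioo_of_tendsto_atTop hSbar hcont
    (tendsto_logRatio_div_nhdsGT hμ0' hα hSbar hS₀)
    (tendsto_logRatio_div_nhdsLT hμcont.continuousWithinAt (hμpos Sbar hSbar) hα hS₀)
  refine ⟨x, ⟨hx, hmin⟩, fun y ⟨hy, hymin⟩ => ?_⟩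
  exact (strictMonoOn_critNumerator hd1 hd2 (fun s hs => hμpos s hs.1)
    (fun s hs => hμ'' s hs.1.le) hS₀).injOn hy hx ((hcrit y hy hymin).trans (hcrit x hx hmin).symm)
end

section
/- Let μ : ℝ → ℝ be twice differentiable with μ(0) = 0, μ'(s) > 0 and μ''(s) ≤ 0 for all s ≥ 0 (Assumption A1). For L > 0 let s*(L) denote the unique maximizer of s ↦ μ(s)(L − s) over [0, L]. Then s* is strictly increasing: for all 0 < L₁ < L₂ one has s*(L₁) < s*(L₂). -/
/-!
Exchange argument: comparing each maximizer with the other one's value gives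
`(μ s₁ - μ s₂)(L₂ - L₁) ≤ 0`, so `μ s₁ ≤ μ s₂` and, `μ` being strictly increasing, `s₁ ≤ s₂`.
If `s₁ = s₂ = s`, this common point is interior (`μ 0 = 0` makes both endpoint values vanish
while the value at `L₁ / 2` is positive), and the first-order conditions
`μ' s (L₁ - s) = μ s = μ' s (L₂ - s)` contradict `μ' s > 0`.
-/

open Set

theorem le_of_isMaxOn_mul_sub {μ : ℝ → ℝ} {L₁ L₂ s₁ s₂ : ℝ} {S₁ S₂ : Set ℝ} (hL : L₁ < L₂)
    (h₁ : IsMaxOn (fun s => μ s * (L₁ - s)) S₁ s₁) (h₂ : IsMaxOn (fun s => μ s * (L₂ - s)) S₂ s₂)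
    (hs₁ : s₁ ∈ S₂) (hs₂ : s₂ ∈ S₁) : μ s₁ ≤ μ s₂ := by
  have key : (μ s₁ - μ s₂) * (L₂ - L₁) ≤ 0 := by
    have := isMaxOn_iff.1 h₁ s₂ hs₂
    have := isMaxOn_iff.1 h₂ s₁ hs₁
    linarith
  exact sub_nonpos.1 (nonpos_of_mul_nonpos_left key (sub_pos.2 hL))

theorem mem_Ioo_of_isMaxOn_mul_sub {μ : ℝ → ℝ} {L s : ℝ} (hL : 0 < L) (hμ0 : μ 0 = 0)
    (hμpos : ∀ x > 0, 0 < μ x) (hs : s ∈ Icc 0 L)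
    (h : IsMaxOn (fun s => μ s * (L - s)) (Icc 0 L) s) : s ∈ Ioo 0 L := by
  have hpos : 0 < μ s * (L - s) :=
    (mul_pos (hμpos _ (half_pos hL)) (by linarith)).trans_le (h ⟨by linarith, by linarith⟩)
  refine ⟨hs.1.lt_of_ne ?_, hs.2.lt_of_ne ?_⟩ <;> rintro rfl <;> simp [hμ0] at hpos

theorem IsLocalMax.hasDerivAt_mul_sub {μ : ℝ → ℝ} {d L s : ℝ}
    (h : IsLocalMax (fun x => μ x * (L - x)) s) (hμ : HasDerivAt μ d s) : d * (L - s) = μ s := by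
  have := h.hasDerivAt_eq_zero (hμ.mul ((hasDerivAt_const s L).sub (hasDerivAt_id s)))
  linarith

theorem stmt_5_general (μ μ' : ℝ → ℝ)
    (hd1 : ∀ s, HasDerivAt μ (μ' s) s)
    (hμ0 : μ 0 = 0)
    (hμ' : ∀ s ≥ (0 : ℝ), 0 < μ' s) :
    ∀ L₁ L₂ : ℝ, 0 < L₁ → L₁ < L₂ →
      ∀ s₁ s₂ : ℝ,
        (s₁ ∈ Icc 0 L₁ ∧ ∀ s ∈ Icc 0 L₁, μ s * (L₁ - s) ≤ μ s₁ * (L₁ - s₁)) →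
        (s₂ ∈ Icc 0 L₂ ∧ ∀ s ∈ Icc 0 L₂, μ s * (L₂ - s) ≤ μ s₂ * (L₂ - s₂)) →
        s₁ < s₂ := by
  intro L₁ L₂ hL₁ hL₁₂ s₁ s₂ ⟨hs₁, hmax₁⟩ ⟨hs₂, hmax₂⟩
  replace hmax₁ := isMaxOn_iff.2 hmax₁
  replace hmax₂ := isMaxOn_iff.2 hmax₂
  have hmono : StrictMonoOn μ (Ici 0) :=
    strictMonoOn_of_hasDerivWithinAt_pos (convex_Ici 0)
      (fun x _ => (hd1 x).continuousAt.continuousWithinAt) (fun x _ => (hd1 x).hasDerivWithinAt)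
      (fun x hx => hμ' x (interior_subset hx))
  obtain ⟨h0, hlt⟩ := mem_Ioo_of_isMaxOn_mul_sub hL₁ hμ0
    (fun x hx => hμ0 ▸ hmono self_mem_Ici hx.le hx) hs₁ hmax₁
  by_contra! h
  have hle : s₁ ≤ s₂ := (hmono.le_iff_le hs₁.1 hs₂.1).1 <|
    le_of_isMaxOn_mul_sub hL₁₂ hmax₁ hmax₂ ⟨hs₁.1, hs₁.2.trans hL₁₂.le⟩ ⟨hs₂.1, h.trans hs₁.2⟩
  obtain rfl := le_antisymm hle h
  have foc₁ := (hmax₁.isLocalMax (Icc_mem_nhds h0 hlt)).hasDerivAt_mul_sub (hd1 s₁)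
  have foc₂ := (hmax₂.isLocalMax (Icc_mem_nhds h0 (hlt.trans hL₁₂))).hasDerivAt_mul_sub (hd1 s₁)
  nlinarith [hμ' s₁ h0.le]

/-- The optimal feedback value `s*(L)`, i.e. the (unique) maximizer of
`s ↦ μ(s)(L - s)` over `[0, L]`, is strictly increasing in `L`. -/
theorem stmt_5 (μ μ' μ'' : ℝ → ℝ)
    (hd1 : ∀ s, HasDerivAt μ (μ' s) s)
    (hd2 : ∀ s, HasDerivAt μ' (μ'' s) s)
    (hμ0 : μ 0 = 0)
    (hμ' : ∀ s ≥ (0 : ℝ), 0 < μ' s)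
    (hμ'' : ∀ s ≥ (0 : ℝ), μ'' s ≤ 0) :
    ∀ L₁ L₂ : ℝ, 0 < L₁ → L₁ < L₂ →
      ∀ s₁ s₂ : ℝ,
        (s₁ ∈ Icc 0 L₁ ∧ ∀ s ∈ Icc 0 L₁, μ s * (L₁ - s) ≤ μ s₁ * (L₁ - s₁)) →
        (s₂ ∈ Icc 0 L₂ ∧ ∀ s ∈ Icc 0 L₂, μ s * (L₂ - s) ≤ μ s₂ * (L₂ - s₂)) →
        s₁ < s₂ :=
  stmt_5_general μ μ' hd1 hμ0 hμ'
end

section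
/- Let μ_max > 0, K > 0 and L > 0, and define the Monod growth law μ(s) = μ_max·s/(K + s) for s ≥ 0. Then the unique maximizer over [0, L] of the function s ↦ μ(s)(L − s) is s = √(K² + K·L) − K, and this value lies in (0, L). -/
/-!
Substituting `t = K + s` and `c = √(K² + K L)`, so that `c² = K (K + L)`, completes the square:
`s (L - s) / (K + s) = (2K + L - 2c) - (t - c)² / t`.
The subtracted term is nonnegative for `t > 0` and vanishes exactly at `t = c`, i.e. at
`s = c - K`, which lies strictly between `0` and `L` because `K² < c² < (K + L)²`.
-/

open Set

namespace Monod

variable {K L c s : ℝ}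

lemma sqrt_sq_add_mul_sub_mem_Ioo (hK : 0 < K) (hL : 0 < L) :
    Real.sqrt (K ^ 2 + K * L) - K ∈ Ioo 0 L := by
  have hKL : 0 < K * L := mul_pos hK hL
  constructor
  · have : K < Real.sqrt (K ^ 2 + K * L) := Real.lt_sqrt_of_sq_lt (by linarith)
    linarith
  · have : Real.sqrt (K ^ 2 + K * L) < K + L :=
      (Real.sqrt_lt' (by linarith)).2 (by nlinarith)
    linarith

lemma mul_sub_div_add_eq (hc : c ^ 2 = K ^ 2 + K * L) (hs : K + s ≠ 0) :
    s * (L - s) / (K + s) = (2 * K + L - 2 * c) - (K + s - c) ^ 2 / (K + s) := by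
  field_simp
  linear_combination hc

lemma mul_sub_div_add_le (hc : c ^ 2 = K ^ 2 + K * L) (hs : 0 < K + s) :
    s * (L - s) / (K + s) ≤ 2 * K + L - 2 * c := by
  rw [mul_sub_div_add_eq hc hs.ne']
  have : 0 ≤ (K + s - c) ^ 2 / (K + s) := by positivity
  linarith

lemma mul_sub_div_add_eq_iff (hc : c ^ 2 = K ^ 2 + K * L) (hs : 0 < K + s) :
    s * (L - s) / (K + s) = 2 * K + L - 2 * c ↔ s = c - K := by
  rw [mul_sub_div_add_eq hc hs.ne', sub_eq_self, div_eq_zero_iff, or_iff_left hs.ne',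
    pow_eq_zero_iff two_ne_zero, sub_eq_zero, eq_sub_iff_add_eq, add_comm]

end Monod

open Monod

/-- Monod growth law: the unique maximizer of `s ↦ μ(s)(L - s)` over `[0, L]`
is `s = √(K² + K L) - K`, and it lies in `(0, L)`. -/
theorem stmt_7 (μmax K L : ℝ) (hμmax : 0 < μmax) (hK : 0 < K) (hL : 0 < L)
    (μ : ℝ → ℝ) (hμ : μ = fun s => μmax * s / (K + s))
    (s' : ℝ) (hs' : s' = Real.sqrt (K ^ 2 + K * L) - K) :
    s' ∈ Ioo 0 L ∧
    (∀ s ∈ Icc 0 L, μ s * (L - s) ≤ μ s' * (L - s')) ∧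
    (∀ s'' ∈ Icc 0 L, (∀ s ∈ Icc 0 L, μ s * (L - s) ≤ μ s'' * (L - s'')) →
      s'' = s') := by
  set c := Real.sqrt (K ^ 2 + K * L)
  have hc : c ^ 2 = K ^ 2 + K * L := Real.sq_sqrt (by positivity)
  have hs'_mem : s' ∈ Ioo 0 L := hs' ▸ sqrt_sq_add_mul_sub_mem_Ioo hK hL
  have hpos : ∀ s ∈ Icc 0 L, 0 < K + s := fun s hs => by linarith [hs.1]
  have hyield : ∀ s, μ s * (L - s) = μmax * (s * (L - s) / (K + s)) := fun s => by
    rw [hμ]; ring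
  have hs'_max : s' * (L - s') / (K + s') = 2 * K + L - 2 * c :=
    (mul_sub_div_add_eq_iff hc (hpos s' (Ioo_subset_Icc_self hs'_mem))).2 hs'
  have hle : ∀ s ∈ Icc 0 L, μ s * (L - s) ≤ μ s' * (L - s') := fun s hs => by
    rw [hyield, hyield, hs'_max]
    exact mul_le_mul_of_nonneg_left (mul_sub_div_add_le hc (hpos s hs)) hμmax.le
  refine ⟨hs'_mem, hle, fun s'' hs'' hmax => ?_⟩
  have hge := hmax s' (Ioo_subset_Icc_self hs'_mem)
  rw [hyield, hyield, hs'_max, mul_le_mul_iff_right₀ hμmax] at hge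
  rw [hs', ← mul_sub_div_add_eq_iff hc (hpos s'' hs'')]
  exact le_antisymm (mul_sub_div_add_le hc (hpos s'' hs'')) hge
end

section
/- Let a₁, a₂ > 0, let m : [0,∞) → ℝ be continuous with m(t) ≥ 0 for all t, and let S₁, S₂, r : [0,∞) → ℝ be functions with S₁, S₂ differentiable, satisfying S₁'(t) = a₁·m(t)·(S₂(t) − S₁(t)) and S₂'(t) = a₂·m(t)·(r(t) − S₂(t)) for all t ≥ 0, where r(t) ≤ S₂(t) for all t ≥ 0. If S₁(0) ≥ S₂(0), then S₁(t) ≥ S₂(t) for all t ≥ 0. -/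
open Set

/-! The gap `S₁ - S₂` has derivative `a₁ m (S₂ - S₁) + a₂ m (S₂ - r)`, which is nonnegative
wherever the gap is negative; a gap that starts nonnegative and can only grow while negative never
becomes negative. -/

theorem nonneg_of_deriv_right_nonneg_of_neg {g g' : ℝ → ℝ} {a : ℝ}
    (hg : ContinuousOn g (Ici a)) (hg' : ∀ t ∈ Ici a, HasDerivWithinAt g (g' t) (Ici t) t)
    (hneg : ∀ t ∈ Ici a, g t < 0 → 0 ≤ g' t) (ha : 0 ≤ g a) :
    ∀ t ∈ Ici a, 0 ≤ g t := by
  intro t ht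
  -- fence `-g` from above by the strictly increasing barrier `ε (x - a + 1)`, then let `ε → 0`
  have fenced : ∀ ε > 0, -g t ≤ ε * (t - a + 1) := by
    intro ε hε
    refine image_le_of_deriv_right_lt_deriv_boundary (f := fun x => -g x)
      (B := fun x => ε * (x - a + 1)) (B' := fun _ => ε) (hg.mono Icc_subset_Ici_self).neg
      (fun x hx => (hg' x (Ico_subset_Ici_self hx)).neg) (by simp; linarith)
      (fun x => ((hasDerivAt_id x).sub_const a |>.add_const 1).const_mul ε |>.congr_deriv
        (mul_one ε)) (fun x hx hfx => ?_) ⟨ht, le_rfl⟩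
    have hx : a ≤ x := hx.1
    have hgx : g x < 0 := by nlinarith
    linarith [hneg x hx hgx]
  by_contra! hgt
  have hc : 0 < t - a + 1 := by linarith [mem_Ici.mp ht]
  have := fenced (-g t / (2 * (t - a + 1))) (div_pos (by linarith) (by positivity))
  rw [div_mul_eq_mul_div, mul_div_mul_right _ _ hc.ne'] at this
  linarith

theorem stmt_8_general (a₁ a₂ : ℝ) (ha₁ : 0 < a₁) (ha₂ : 0 < a₂)
    (m S₁ S₂ r : ℝ → ℝ)
    (hm : ∀ t ∈ Ici (0 : ℝ), 0 ≤ m t)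
    (hS₁ : ∀ t ∈ Ici (0 : ℝ), HasDerivAt S₁ (a₁ * m t * (S₂ t - S₁ t)) t)
    (hS₂ : ∀ t ∈ Ici (0 : ℝ), HasDerivAt S₂ (a₂ * m t * (r t - S₂ t)) t)
    (hr : ∀ t ∈ Ici (0 : ℝ), r t ≤ S₂ t)
    (h0 : S₂ 0 ≤ S₁ 0) :
    ∀ t ∈ Ici (0 : ℝ), S₂ t ≤ S₁ t := by
  have hgap : ∀ t ∈ Ici (0 : ℝ), HasDerivAt (fun s => S₁ s - S₂ s)
      (a₁ * m t * (S₂ t - S₁ t) - a₂ * m t * (r t - S₂ t)) t :=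
    fun t ht => (hS₁ t ht).sub (hS₂ t ht)
  have hrise : ∀ t ∈ Ici (0 : ℝ), S₁ t - S₂ t < 0 →
      0 ≤ a₁ * m t * (S₂ t - S₁ t) - a₂ * m t * (r t - S₂ t) := by
    intro t ht hneg
    have hm₁ : 0 ≤ a₁ * m t := mul_nonneg ha₁.le (hm t ht)
    have hm₂ : 0 ≤ a₂ * m t := mul_nonneg ha₂.le (hm t ht)
    nlinarith [hr t ht]
  intro t ht
  exact sub_nonneg.mp <| nonneg_of_deriv_right_nonneg_of_neg
    (fun s hs => (hgap s hs).continuousAt.continuousWithinAt)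
    (fun s hs => (hgap s hs).hasDerivWithinAt) hrise (sub_nonneg.mpr h0) t ht

/-- Invariance of the domain `{S₁ ≥ S₂}` for the two-compartment model of an
inhomogeneous resource when the injected concentration satisfies `r ≤ S₂`. -/
theorem stmt_8 (a₁ a₂ : ℝ) (ha₁ : 0 < a₁) (ha₂ : 0 < a₂)
    (m S₁ S₂ r : ℝ → ℝ)
    (hmc : ContinuousOn m (Ici 0))
    (hm : ∀ t ∈ Ici (0 : ℝ), 0 ≤ m t)
    (hS₁ : ∀ t ∈ Ici (0 : ℝ), HasDerivAt S₁ (a₁ * m t * (S₂ t - S₁ t)) t)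
    (hS₂ : ∀ t ∈ Ici (0 : ℝ), HasDerivAt S₂ (a₂ * m t * (r t - S₂ t)) t)
    (hr : ∀ t ∈ Ici (0 : ℝ), r t ≤ S₂ t)
    (h0 : S₂ 0 ≤ S₁ 0) :
    ∀ t ∈ Ici (0 : ℝ), S₂ t ≤ S₁ t :=
  stmt_8_general a₁ a₂ ha₁ ha₂ m S₁ S₂ r hm hS₁ hS₂ hr h0
end

section
/- Let α > 0, m > 0, p ∈ (0,1) with p ≠ 1/2, and real numbers s_r and S₀. Define on [0,∞): S₁(t) = s_r + (S₀ − s_r)·((1−p)·exp(−αmt/(1−p)) − p·exp(−αmt/p))/(1 − 2p) and S₂(t) = s_r + (S₀ − s_r)·exp(−αmt/(1−p)). Then S₁(0) = S₂(0) = S₀, and for all t ≥ 0: S₁'(t) = (α/p)·m·(S₂(t) − S₁(t)) and S₂'(t) = (α/(1−p))·m·(s_r − S₂(t)). -/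
/-!
In the time scale `τ = αmt` both concentrations are `sr + (S₀ - sr) * (kernel)`, with kernels
`A(p, τ)` and `exp (-τ / (1 - p))`. Since `A` solves the scalar linear system
`A' = (exp (-τ / (1 - p)) - A) / p`, the two ODEs follow from the chain rule.
-/

open Set Real

/-- The paper's kernel `A(p, τ)` for the inhomogeneous case; `τ` plays the role of `mt`. -/
noncomputable def twoCompartmentKernel (p τ : ℝ) : ℝ :=
  ((1 - p) * exp (-τ / (1 - p)) - p * exp (-τ / p)) / (1 - 2 * p)

lemma hasDerivAt_exp_neg_div (c τ : ℝ) :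
    HasDerivAt (fun τ => exp (-τ / c)) (-exp (-τ / c) / c) τ := by
  simpa [neg_div, div_eq_mul_inv, mul_comm] using ((hasDerivAt_id τ).neg.div_const c).exp

lemma twoCompartmentKernel_zero {p : ℝ} (hp : 1 - 2 * p ≠ 0) : twoCompartmentKernel p 0 = 1 := by
  simp only [twoCompartmentKernel, neg_zero, zero_div, exp_zero, mul_one]
  rw [div_eq_one_iff_eq hp]
  ring

lemma hasDerivAt_twoCompartmentKernel {p : ℝ} (hp₀ : p ≠ 0) (hp₁ : 1 - p ≠ 0)
    (hp : 1 - 2 * p ≠ 0) (τ : ℝ) :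
    HasDerivAt (twoCompartmentKernel p)
      ((exp (-τ / (1 - p)) - twoCompartmentKernel p τ) / p) τ := by
  refine ((((hasDerivAt_exp_neg_div (1 - p) τ).const_mul (1 - p)).sub
    ((hasDerivAt_exp_neg_div p τ).const_mul p)).div_const (1 - 2 * p)).congr_deriv ?_
  have hK : twoCompartmentKernel p τ * (1 - 2 * p) =
      (1 - p) * exp (-τ / (1 - p)) - p * exp (-τ / p) := div_mul_cancel₀ _ hp
  rw [div_eq_div_iff hp hp₀, mul_div_cancel₀ _ hp₁, mul_div_cancel₀ _ hp₀]
  linear_combination hK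

lemma HasDerivAt.const_add_mul_comp_mul {g : ℝ → ℝ} {g' : ℝ} (a b k t : ℝ)
    (hg : HasDerivAt g g' (k * t)) :
    HasDerivAt (fun t => a + b * g (k * t)) (b * (g' * k)) t := by
  simpa using ((hg.comp t ((hasDerivAt_id t).const_mul k)).const_mul b).const_add a

theorem stmt_9_general (α m p sr S₀ : ℝ)
    (hp : p ∈ Ioo (0 : ℝ) 1) (hp' : p ≠ 1 / 2)
    (S₁ S₂ : ℝ → ℝ)
    (hS₁ : S₁ = fun t => sr + (S₀ - sr) *
      (((1 - p) * Real.exp (-(α * m * t) / (1 - p))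
        - p * Real.exp (-(α * m * t) / p)) / (1 - 2 * p)))
    (hS₂ : S₂ = fun t => sr + (S₀ - sr) * Real.exp (-(α * m * t) / (1 - p))) :
    S₁ 0 = S₀ ∧ S₂ 0 = S₀ ∧
    ∀ t ∈ Ici (0 : ℝ),
      HasDerivAt S₁ (α / p * m * (S₂ t - S₁ t)) t ∧
      HasDerivAt S₂ (α / (1 - p) * m * (sr - S₂ t)) t := by
  have hp₀ : p ≠ 0 := hp.1.ne'
  have hp₁ : 1 - p ≠ 0 := (sub_pos.2 hp.2).ne'
  have hp₂ : 1 - 2 * p ≠ 0 := fun h => hp' (by linarith)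
  replace hS₁ : S₁ = fun t => sr + (S₀ - sr) * twoCompartmentKernel p (α * m * t) := hS₁
  subst hS₁ hS₂
  refine ⟨by simp [twoCompartmentKernel_zero hp₂], by simp, fun t _ => ⟨?_, ?_⟩⟩
  · convert (hasDerivAt_twoCompartmentKernel hp₀ hp₁ hp₂ _).const_add_mul_comp_mul sr (S₀ - sr)
      (α * m) t using 1
    field_simp
    ring
  · convert (hasDerivAt_exp_neg_div (1 - p) _).const_add_mul_comp_mul sr (S₀ - sr) (α * m) t
      using 1
    ring

/-- Explicit solution of the two-compartment model under constant control,
asymmetric case `p ≠ 1/2`. -/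
theorem stmt_9 (α m p sr S₀ : ℝ) (hα : 0 < α) (hm : 0 < m)
    (hp : p ∈ Ioo (0 : ℝ) 1) (hp' : p ≠ 1 / 2)
    (S₁ S₂ : ℝ → ℝ)
    (hS₁ : S₁ = fun t => sr + (S₀ - sr) *
      (((1 - p) * Real.exp (-(α * m * t) / (1 - p))
        - p * Real.exp (-(α * m * t) / p)) / (1 - 2 * p)))
    (hS₂ : S₂ = fun t => sr + (S₀ - sr) * Real.exp (-(α * m * t) / (1 - p))) :
    S₁ 0 = S₀ ∧ S₂ 0 = S₀ ∧
    ∀ t ∈ Ici (0 : ℝ),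
      HasDerivAt S₁ (α / p * m * (S₂ t - S₁ t)) t ∧
      HasDerivAt S₂ (α / (1 - p) * m * (sr - S₂ t)) t :=
  stmt_9_general α m p sr S₀ hp hp' S₁ S₂ hS₁ hS₂
end

section
/- Let α > 0 and p ∈ (0, 1/2), and define A(p, τ) = ((1−p)·exp(−ατ/(1−p)) − p·exp(−ατ/p))/(1 − 2p) for τ ≥ 0. Then there exists τ₀ ≥ 0 such that for all τ > τ₀ one has A(p, τ) < exp(−ατ). -/
/-!
Dropping the positive term `p * exp (-(α τ) / p)` bounds `A(p, τ)` by a constant multiple of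
`exp (-(α τ) / (1 - p))`. Since `p < 1`, this exponential decays strictly faster than
`exp (-(α τ))`, so any constant multiple of it is eventually below `exp (-(α τ))`.
-/

open Set Filter Topology

theorem Filter.Eventually.exists_nonneg_forall_gt {P : ℝ → Prop} (h : ∀ᶠ t in atTop, P t) :
    ∃ t₀ ≥ (0 : ℝ), ∀ t > t₀, P t := by
  obtain ⟨a, ha⟩ := eventually_atTop.1 h
  exact ⟨max a 0, le_max_right a 0, fun t ht => ha t (le_max_left a 0 |>.trans ht.le)⟩

theorem Real.eventually_mul_exp_neg_lt_exp_neg (C : ℝ) {a b : ℝ} (hab : a < b) :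
    ∀ᶠ t in atTop, C * Real.exp (-(b * t)) < Real.exp (-(a * t)) := by
  have hdecay : Tendsto (fun t => C * Real.exp (-((b - a) * t))) atTop (𝓝 0) := by
    simpa using (Real.tendsto_exp_neg_atTop_nhds_zero.comp
      (tendsto_id.const_mul_atTop (sub_pos.2 hab))).const_mul C
  filter_upwards [hdecay.eventually_lt_const zero_lt_one] with t ht
  calc C * Real.exp (-(b * t)) = C * Real.exp (-((b - a) * t)) * Real.exp (-(a * t)) := by
        rw [mul_assoc, ← Real.exp_add]; ring_nf
    _ < 1 * Real.exp (-(a * t)) := by gcongr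
    _ = Real.exp (-(a * t)) := one_mul _

/-- Remark 1: for `p ∈ (0, 1/2)`, the inhomogeneous decay kernel
`A(p, τ)` is eventually smaller than the homogeneous one `exp(-ατ)`. -/
theorem stmt_11 (α p : ℝ) (hα : 0 < α) (hp : p ∈ Ioo (0 : ℝ) (1 / 2))
    (A : ℝ → ℝ)
    (hA : A = fun τ => ((1 - p) * Real.exp (-(α * τ) / (1 - p))
      - p * Real.exp (-(α * τ) / p)) / (1 - 2 * p)) :
    ∃ τ₀ ≥ (0 : ℝ), ∀ τ > τ₀, A τ < Real.exp (-(α * τ)) := by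
  obtain ⟨hp0, hp2⟩ := hp
  have h2p : 0 < 1 - 2 * p := by linarith
  have hrate : α < α / (1 - p) := by
    rw [lt_div_iff₀ (by linarith)]
    nlinarith
  have hbound (τ : ℝ) : A τ < (1 - p) / (1 - 2 * p) * Real.exp (-(α / (1 - p) * τ)) := by
    have hslow : 0 < p * Real.exp (-(α * τ) / p) := by positivity
    calc A τ < (1 - p) * Real.exp (-(α * τ) / (1 - p)) / (1 - 2 * p) := by
          rw [hA]
          exact div_lt_div_of_pos_right (sub_lt_self _ hslow) h2p
      _ = (1 - p) / (1 - 2 * p) * Real.exp (-(α / (1 - p) * τ)) := by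
          rw [div_mul_eq_mul_div, div_mul_eq_mul_div, neg_div]
  exact (Real.eventually_mul_exp_neg_lt_exp_neg _ hrate).mono
    (fun τ h => (hbound τ).trans h) |>.exists_nonneg_forall_gt
end

section
/- Let μ : ℝ → ℝ be twice differentiable with μ'(s) > 0 and μ''(s) ≤ 0 for all s ≥ 0, let S₁ > S₂ > 0 and γ > 0. Then the function φ(s) = μ(s)·(1 + γ·(S₂ − s)/(S₁ − S₂)) is strictly concave on [0, S₂]. -/
open Set

/-
The integrand is `μ` times the affine factor `L(s) = 1 + γ(S₂ - s)/(S₁ - S₂)`, which has slope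
`-γ/(S₁ - S₂) < 0` and is nonnegative on `[0, S₂]`. Hence
`φ'' = μ'' L + 2 L' μ' < 0` there: the first term is `≤ 0` by concavity of `μ`, the second `< 0`
because `μ` is increasing.
-/

theorem strictConcaveOn_of_hasDerivAt2_neg {D : Set ℝ} (hD : Convex ℝ D)
    {f f' f'' : ℝ → ℝ} (hf : ∀ x, HasDerivAt f (f' x) x) (hf' : ∀ x, HasDerivAt f' (f'' x) x)
    (hf''_neg : ∀ x ∈ interior D, f'' x < 0) : StrictConcaveOn ℝ D f := by
  have hderiv : deriv f = f' := funext fun x => (hf x).deriv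
  refine strictConcaveOn_of_deriv2_neg hD
    (fun x _ => (hf x).continuousAt.continuousWithinAt) fun x hx => ?_
  simpa only [Function.iterate_succ, Function.iterate_zero, Function.comp_apply, id_eq, hderiv,
    (hf' x).deriv] using hf''_neg x hx

theorem strictConcaveOn_mul_of_hasDerivAt_const_neg {D : Set ℝ} (hD : Convex ℝ D)
    {f f' f'' g : ℝ → ℝ} {m : ℝ} (hf : ∀ x, HasDerivAt f (f' x) x)
    (hf' : ∀ x, HasDerivAt f' (f'' x) x) (hg : ∀ x, HasDerivAt g m x) (hm : m < 0)
    (hf'_pos : ∀ x ∈ interior D, 0 < f' x) (hf''_nonpos : ∀ x ∈ interior D, f'' x ≤ 0)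
    (hg_nonneg : ∀ x ∈ interior D, 0 ≤ g x) :
    StrictConcaveOn ℝ D (fun x => f x * g x) := by
  refine strictConcaveOn_of_hasDerivAt2_neg hD (fun x => (hf x).mul (hg x))
    (fun x => ((hf' x).mul (hg x)).add ((hf x).mul_const m)) fun x hx => ?_
  have hcurv : f'' x * g x ≤ 0 := mul_nonpos_of_nonpos_of_nonneg (hf''_nonpos x hx) (hg_nonneg x hx)
  have hslope : f' x * m < 0 := mul_neg_of_pos_of_neg (hf'_pos x hx) hm
  linarith

theorem stmt_12_general (μ μ' μ'' : ℝ → ℝ)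
    (hd1 : ∀ s, HasDerivAt μ (μ' s) s)
    (hd2 : ∀ s, HasDerivAt μ' (μ'' s) s)
    (hμ' : ∀ s ≥ (0 : ℝ), 0 < μ' s)
    (hμ'' : ∀ s ≥ (0 : ℝ), μ'' s ≤ 0)
    (S₁ S₂ γ : ℝ) (hS₁ : S₂ < S₁) (hγ : 0 < γ)
    (φ : ℝ → ℝ)
    (hφ : φ = fun s => μ s * (1 + γ * (S₂ - s) / (S₁ - S₂))) :
    StrictConcaveOn ℝ (Icc 0 S₂) φ := by
  have hgap : 0 < S₁ - S₂ := sub_pos.mpr hS₁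
  have hL : ∀ s, HasDerivAt (fun s => 1 + γ * (S₂ - s) / (S₁ - S₂)) (γ * -1 / (S₁ - S₂)) s :=
    fun s => ((((hasDerivAt_id s).const_sub S₂).const_mul γ).div_const _).const_add 1
  rw [hφ]
  refine strictConcaveOn_mul_of_hasDerivAt_const_neg (convex_Icc 0 S₂) hd1 hd2 hL
    (div_neg_of_neg_of_pos (by linarith) hgap) ?_ ?_ ?_ <;>
    rw [interior_Icc] <;> intro s hs
  · exact hμ' s hs.1.le
  · exact hμ'' s hs.1.le
  · have : 0 ≤ γ * (S₂ - s) / (S₁ - S₂) :=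
      div_nonneg (mul_nonneg hγ.le (sub_nonneg.mpr hs.2.le)) hgap.le
    linarith

/-- Lemma 3, first part: the Hamiltonian integrand
`φ(s) = μ(s)(1 + γ(S₂ - s)/(S₁ - S₂))` is strictly concave on `[0, S₂]`. -/
theorem stmt_12 (μ μ' μ'' : ℝ → ℝ)
    (hd1 : ∀ s, HasDerivAt μ (μ' s) s)
    (hd2 : ∀ s, HasDerivAt μ' (μ'' s) s)
    (hμ' : ∀ s ≥ (0 : ℝ), 0 < μ' s)
    (hμ'' : ∀ s ≥ (0 : ℝ), μ'' s ≤ 0)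
    (S₁ S₂ γ : ℝ) (hS₂ : 0 < S₂) (hS₁ : S₂ < S₁) (hγ : 0 < γ)
    (φ : ℝ → ℝ)
    (hφ : φ = fun s => μ s * (1 + γ * (S₂ - s) / (S₁ - S₂))) :
    StrictConcaveOn ℝ (Icc 0 S₂) φ :=
  stmt_12_general μ μ' μ'' hd1 hd2 hμ' hμ'' S₁ S₂ γ hS₁ hγ φ hφ
end

section
/- Let μ : ℝ → ℝ be twice differentiable with μ(0) = 0, μ'(s) > 0 and μ''(s) ≤ 0 for all s ≥ 0, let S₁ > S₂ > 0 and γ > 0, and define φ(s) = μ(s)·(1 + γ·(S₂ − s)/(S₁ − S₂)) and ψ = μ'(S₂) − γ·μ(S₂)/(S₁ − S₂). Then φ(s) ≤ φ(S₂) for all s ∈ (0, S₂] if and only if ψ ≥ 0. -/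
open Set Filter Topology

/-!
Write `φ = μ · g` with `g s = 1 + c (S₂ - s)`, `c = γ / (S₁ - S₂) > 0`, so that
`φ' = μ' g - c μ`, `φ'' = μ'' g - 2 c μ'` and `ψ = φ'(S₂)`.
If `S₂` maximizes `φ` on `(0, S₂]`, the left difference quotients at `S₂` are nonnegative,
hence so is `ψ`. Conversely, `g ≥ 0` on `[0, S₂]`, so `φ'' ≤ 0` there: `φ'` decreases to
`φ'(S₂) = ψ ≥ 0`, and `φ` increases on `[0, S₂]`.
-/

theorem HasDerivAt.nonneg_of_forall_le_left {f : ℝ → ℝ} {f' a b : ℝ} (hf : HasDerivAt f f' b)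
    (hab : a < b) (hle : ∀ x ∈ Ioo a b, f x ≤ f b) : 0 ≤ f' := by
  refine ge_of_tendsto (hasDerivAt_iff_tendsto_slope_left_right.mp hf).1 ?_
  filter_upwards [Ioo_mem_nhdsLT hab] with x hx
  rw [slope_def_field]
  exact div_nonneg_of_nonpos (sub_nonpos.2 (hle x hx)) (sub_nonpos.2 hx.2.le)

theorem monotoneOn_Icc_of_antitoneOn_deriv {f f' : ℝ → ℝ} {a b : ℝ}
    (hf : ∀ x ∈ Icc a b, HasDerivAt f (f' x) x) (hf' : AntitoneOn f' (Icc a b))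
    (hb : 0 ≤ f' b) : MonotoneOn f (Icc a b) := by
  refine monotoneOn_of_hasDerivWithinAt_nonneg (convex_Icc a b) (f' := f')
    (fun x hx => (hf x hx).continuousAt.continuousWithinAt) (fun x hx => ?_) (fun x hx => ?_)
  · exact (hf x (interior_subset hx)).hasDerivWithinAt
  · rw [interior_Icc] at hx
    exact hb.trans (hf' ⟨hx.1.le, hx.2.le⟩ ⟨hx.1.le.trans hx.2.le, le_rfl⟩ hx.2.le)

section AffineWeight

variable {μ μ' μ'' : ℝ → ℝ} {a b c : ℝ}

theorem HasDerivAt.mul_one_add_mul_sub {m x : ℝ} (hμ : HasDerivAt μ m x) :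
    HasDerivAt (fun s => μ s * (1 + c * (b - s))) (m * (1 + c * (b - x)) - c * μ x) x := by
  have hg : HasDerivAt (fun s => 1 + c * (b - s)) (-c) x := by
    simpa using (((hasDerivAt_id x).const_sub b).const_mul c).const_add 1
  exact (hμ.mul hg).congr_deriv (by ring)

theorem antitoneOn_deriv_mul_one_add_mul_sub (hd1 : ∀ s, HasDerivAt μ (μ' s) s)
    (hd2 : ∀ s, HasDerivAt μ' (μ'' s) s) (hμ' : ∀ s ∈ Icc a b, 0 ≤ μ' s)
    (hμ'' : ∀ s ∈ Icc a b, μ'' s ≤ 0) (hc : 0 ≤ c) :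
    AntitoneOn (fun s => μ' s * (1 + c * (b - s)) - c * μ s) (Icc a b) := by
  have hderiv : ∀ x, HasDerivAt (fun s => μ' s * (1 + c * (b - s)) - c * μ s)
      (μ'' x * (1 + c * (b - x)) - c * μ' x - c * μ' x) x :=
    fun x => (hd2 x).mul_one_add_mul_sub.sub ((hd1 x).const_mul c)
  refine antitoneOn_of_hasDerivWithinAt_nonpos (convex_Icc a b)
    (fun x _ => (hderiv x).continuousAt.continuousWithinAt)
    (fun x _ => (hderiv x).hasDerivWithinAt) (fun x hx => ?_)
  have hx : x ∈ Icc a b := interior_subset hx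
  have hg : 0 ≤ 1 + c * (b - x) := by
    linarith [mul_nonneg hc (sub_nonneg.2 hx.2)]
  linarith [mul_nonpos_of_nonpos_of_nonneg (hμ'' x hx) hg, mul_nonneg hc (hμ' x hx)]

end AffineWeight

theorem stmt_13_general (μ μ' μ'' : ℝ → ℝ)
    (hd1 : ∀ s, HasDerivAt μ (μ' s) s)
    (hd2 : ∀ s, HasDerivAt μ' (μ'' s) s)
    (hμ' : ∀ s ≥ (0 : ℝ), 0 < μ' s)
    (hμ'' : ∀ s ≥ (0 : ℝ), μ'' s ≤ 0)
    (S₁ S₂ γ : ℝ) (hS₂ : 0 < S₂) (hS₁ : S₂ < S₁) (hγ : 0 < γ)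
    (φ : ℝ → ℝ) (ψ : ℝ)
    (hφ : φ = fun s => μ s * (1 + γ * (S₂ - s) / (S₁ - S₂)))
    (hψ : ψ = μ' S₂ - γ * μ S₂ / (S₁ - S₂)) :
    (∀ s ∈ Ioc 0 S₂, φ s ≤ φ S₂) ↔ 0 ≤ ψ := by
  set c := γ / (S₁ - S₂)
  have hc : 0 ≤ c := (div_pos hγ (sub_pos.2 hS₁)).le
  have hφc : φ = fun s => μ s * (1 + c * (S₂ - s)) := by rw [hφ]; ext s; ring
  have hψc : ψ = μ' S₂ * (1 + c * (S₂ - S₂)) - c * μ S₂ := by rw [hψ]; ring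
  have hφ' : ∀ x, HasDerivAt φ (μ' x * (1 + c * (S₂ - x)) - c * μ x) x :=
    hφc ▸ fun x => (hd1 x).mul_one_add_mul_sub
  rw [hψc]
  constructor
  · exact fun hmax => (hφ' S₂).nonneg_of_forall_le_left hS₂ fun x hx => hmax x ⟨hx.1, hx.2.le⟩
  · intro hψ₀ s hs
    have hanti := antitoneOn_deriv_mul_one_add_mul_sub (a := 0) (b := S₂) hd1 hd2
      (fun s hs => (hμ' s hs.1).le) (fun s hs => hμ'' s hs.1) hc
    exact monotoneOn_Icc_of_antitoneOn_deriv (fun x _ => hφ' x) hanti hψ₀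
      ⟨hs.1.le, hs.2⟩ ⟨hS₂.le, le_rfl⟩ hs.2

/-- Lemma 3, second part: the maximum of `φ` over `(0, S₂]` is attained at
`s = S₂` exactly when `ψ = μ'(S₂) - γ μ(S₂)/(S₁ - S₂) ≥ 0`. -/
theorem stmt_13 (μ μ' μ'' : ℝ → ℝ)
    (hd1 : ∀ s, HasDerivAt μ (μ' s) s)
    (hd2 : ∀ s, HasDerivAt μ' (μ'' s) s)
    (hμ0 : μ 0 = 0)
    (hμ' : ∀ s ≥ (0 : ℝ), 0 < μ' s)
    (hμ'' : ∀ s ≥ (0 : ℝ), μ'' s ≤ 0)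
    (S₁ S₂ γ : ℝ) (hS₂ : 0 < S₂) (hS₁ : S₂ < S₁) (hγ : 0 < γ)
    (φ : ℝ → ℝ) (ψ : ℝ)
    (hφ : φ = fun s => μ s * (1 + γ * (S₂ - s) / (S₁ - S₂)))
    (hψ : ψ = μ' S₂ - γ * μ S₂ / (S₁ - S₂)) :
    (∀ s ∈ Ioc 0 S₂, φ s ≤ φ S₂) ↔ 0 ≤ ψ :=
  stmt_13_general μ μ' μ'' hd1 hd2 hμ' hμ'' S₁ S₂ γ hS₂ hS₁ hγ φ ψ hφ hψ
end

section
/- Let μ : ℝ → ℝ be twice differentiable with μ(0) = 0, μ'(s) > 0 and μ''(s) ≤ 0 for all s ≥ 0, and let S₁ > S₂ > 0. For γ > 0 let s*(γ) denote the unique maximizer over [0, S₂] of the function s ↦ μ(s)·(1 + γ·(S₂ − s)/(S₁ − S₂)). Then s* is nonincreasing: for all 0 < γ₁ < γ₂ one has s*(γ₂) ≤ s*(γ₁). -/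
/-!
Dividing by `S₁ - S₂`, the objective is `μ s + γ' · μ s (S₂ - s)` with `γ' = γ / (S₁ - S₂)`,
i.e. of the form `a + γ' b`. For such a family, adding the two optimality inequalities of
maximizers `s₁, s₂` at `γ'₁ < γ'₂` gives `b s₁ ≤ b s₂`; optimality of `s₁` at `γ'₁ ≥ 0` then
gives `a s₂ ≤ a s₁`, and `a = μ` is strictly increasing on `[0, ∞)`.
-/

open Set

section ComparativeStatics

variable {α : Type*} {S : Set α} {a b : α → ℝ} {γ₁ γ₂ : ℝ} {x₁ x₂ : α}

theorem le_of_isMaxOn_add_mul (hx₁ : x₁ ∈ S) (hx₂ : x₂ ∈ S)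
    (h₁ : IsMaxOn (fun x => a x + γ₁ * b x) S x₁)
    (h₂ : IsMaxOn (fun x => a x + γ₂ * b x) S x₂) (hγ : γ₁ < γ₂) :
    b x₁ ≤ b x₂ := by
  have h₁₂ : a x₂ + γ₁ * b x₂ ≤ a x₁ + γ₁ * b x₁ := h₁ hx₂
  have h₂₁ : a x₁ + γ₂ * b x₁ ≤ a x₂ + γ₂ * b x₂ := h₂ hx₁
  have : (γ₂ - γ₁) * (b x₁ - b x₂) ≤ 0 := by linarith
  nlinarith

theorem le_of_isMaxOn_add_mul_of_nonneg (hx₁ : x₁ ∈ S) (hx₂ : x₂ ∈ S)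
    (h₁ : IsMaxOn (fun x => a x + γ₁ * b x) S x₁)
    (h₂ : IsMaxOn (fun x => a x + γ₂ * b x) S x₂) (hγ : γ₁ < γ₂) (hγ₁ : 0 ≤ γ₁) :
    a x₂ ≤ a x₁ := by
  have hb := le_of_isMaxOn_add_mul hx₁ hx₂ h₁ h₂ hγ
  have h₁₂ : a x₂ + γ₁ * b x₂ ≤ a x₁ + γ₁ * b x₁ := h₁ hx₂
  nlinarith

end ComparativeStatics

theorem strictMonoOn_Ici_of_hasDerivAt_pos {f f' : ℝ → ℝ} {c : ℝ}
    (hf : ∀ x, HasDerivAt f (f' x) x) (hf' : ∀ x ≥ c, 0 < f' x) :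
    StrictMonoOn f (Ici c) :=
  strictMonoOn_of_deriv_pos (convex_Ici c)
    (fun x _ => (hf x).continuousAt.continuousWithinAt)
    fun x hx => by
      rw [interior_Ici] at hx
      rw [(hf x).deriv]
      exact hf' x hx.le

theorem mul_one_add_mul_sub_div_eq {μ γ S₁ S₂ s : ℝ} (h : S₁ - S₂ ≠ 0) :
    μ * (1 + γ * (S₂ - s) / (S₁ - S₂)) = μ + γ / (S₁ - S₂) * (μ * (S₂ - s)) := by
  field_simp

theorem stmt_14_general (μ μ' : ℝ → ℝ)
    (hd1 : ∀ s, HasDerivAt μ (μ' s) s)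
    (hμ' : ∀ s ≥ (0 : ℝ), 0 < μ' s)
    (S₁ S₂ : ℝ) (hS₁ : S₂ < S₁) :
    ∀ γ₁ γ₂ : ℝ, 0 < γ₁ → γ₁ < γ₂ →
      ∀ s₁ s₂ : ℝ,
        (s₁ ∈ Icc 0 S₂ ∧ ∀ s ∈ Icc 0 S₂,
          μ s * (1 + γ₁ * (S₂ - s) / (S₁ - S₂)) ≤
            μ s₁ * (1 + γ₁ * (S₂ - s₁) / (S₁ - S₂))) →
        (s₂ ∈ Icc 0 S₂ ∧ ∀ s ∈ Icc 0 S₂,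
          μ s * (1 + γ₂ * (S₂ - s) / (S₁ - S₂)) ≤
            μ s₂ * (1 + γ₂ * (S₂ - s₂) / (S₁ - S₂))) →
        s₂ ≤ s₁ := by
  intro γ₁ γ₂ hγ₁ hγ s₁ s₂ ⟨hs₁, hmax₁⟩ ⟨hs₂, hmax₂⟩
  have hc : 0 < S₁ - S₂ := sub_pos.mpr hS₁
  simp only [mul_one_add_mul_sub_div_eq hc.ne'] at hmax₁ hmax₂
  have hμ : μ s₂ ≤ μ s₁ :=
    le_of_isMaxOn_add_mul_of_nonneg (b := fun s => μ s * (S₂ - s)) hs₁ hs₂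
      (isMaxOn_iff.mpr hmax₁) (isMaxOn_iff.mpr hmax₂)
      (div_lt_div_of_pos_right hγ hc) (div_pos hγ₁ hc).le
  exact ((strictMonoOn_Ici_of_hasDerivAt_pos hd1 hμ').le_iff_le hs₂.1 hs₁.1).mp hμ

/-- The maximizer of `s ↦ μ(s)(1 + γ(S₂ - s)/(S₁ - S₂))` over `[0, S₂]` is
nonincreasing in the adjoint ratio `γ`. -/
theorem stmt_14 (μ μ' μ'' : ℝ → ℝ)
    (hd1 : ∀ s, HasDerivAt μ (μ' s) s)
    (hd2 : ∀ s, HasDerivAt μ' (μ'' s) s)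
    (hμ0 : μ 0 = 0)
    (hμ' : ∀ s ≥ (0 : ℝ), 0 < μ' s)
    (hμ'' : ∀ s ≥ (0 : ℝ), μ'' s ≤ 0)
    (S₁ S₂ : ℝ) (hS₂ : 0 < S₂) (hS₁ : S₂ < S₁) :
    ∀ γ₁ γ₂ : ℝ, 0 < γ₁ → γ₁ < γ₂ →
      ∀ s₁ s₂ : ℝ,
        (s₁ ∈ Icc 0 S₂ ∧ ∀ s ∈ Icc 0 S₂,
          μ s * (1 + γ₁ * (S₂ - s) / (S₁ - S₂)) ≤
            μ s₁ * (1 + γ₁ * (S₂ - s₁) / (S₁ - S₂))) →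
        (s₂ ∈ Icc 0 S₂ ∧ ∀ s ∈ Icc 0 S₂,
          μ s * (1 + γ₂ * (S₂ - s) / (S₁ - S₂)) ≤
            μ s₂ * (1 + γ₂ * (S₂ - s₂) / (S₁ - S₂))) →
        s₂ ≤ s₁ :=
  stmt_14_general μ μ' hd1 hμ' S₁ S₂ hS₁
end

section
/- Let a₁, a₂ > 0, T > 0, and let m : [0, T] → ℝ be continuous with m(t) > 0 for all t ∈ [0, T]. Suppose γ : [0, T] → ℝ is differentiable and satisfies γ'(t) = m(t)·((a₂ − a₁)·γ(t) − a₂) for all t ∈ [0, T] and γ(T) = 0. Then γ(t) > 0 for all t ∈ [0, T). -/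
/-!
Multiplying by the integrating factor `exp (-∫ p)` turns the linear equation `γ' = p γ + q` into
`(γ e^{-∫ p})' = q e^{-∫ p}`. With `q = -a₂ m < 0` this product is strictly decreasing, and it
vanishes at `T`, so it is positive on `[0, T)`, and hence so is `γ`.
-/

open Set

namespace ContinuousOn

variable {p : ℝ → ℝ} {a b : ℝ}

theorem continuousOn_primitive_Icc (hp : ContinuousOn p (Icc a b)) (hab : a ≤ b) :
    ContinuousOn (fun x => ∫ s in a..x, p s) (Icc a b) := by
  simpa only [uIcc_of_le hab] using
    intervalIntegral.continuousOn_primitive_interval (hp.integrableOn_Icc.mono_set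
      (uIcc_of_le hab).subset)

theorem hasDerivAt_primitive_of_mem_Ioo (hp : ContinuousOn p (Icc a b)) {t : ℝ}
    (ht : t ∈ Ioo a b) : HasDerivAt (fun x => ∫ s in a..x, p s) (p t) t := by
  have hint : IntervalIntegrable p MeasureTheory.volume a t :=
    (hp.mono (by rw [uIcc_of_le ht.1.le]; exact Icc_subset_Icc_right ht.2.le)).intervalIntegrable
  exact intervalIntegral.integral_hasDerivAt_right hint
    ((hp.mono Ioo_subset_Icc_self).stronglyMeasurableAtFilter isOpen_Ioo t ht)
    (hp.continuousAt (Icc_mem_nhds ht.1 ht.2))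

end ContinuousOn

variable {p q γ : ℝ → ℝ} {a b : ℝ}

theorem strictAntiOn_mul_exp_neg_primitive (hab : a ≤ b) (hp : ContinuousOn p (Icc a b))
    (hq : ∀ t ∈ Ioo a b, q t < 0)
    (hγ : ∀ t ∈ Icc a b, HasDerivWithinAt γ (p t * γ t + q t) (Icc a b) t) :
    StrictAntiOn (fun t => γ t * Real.exp (-∫ s in a..t, p s)) (Icc a b) := by
  set F : ℝ → ℝ := fun t => ∫ s in a..t, p s
  have hγc : ContinuousOn γ (Icc a b) := fun t ht => (hγ t ht).continuousWithinAt
  refine strictAntiOn_of_deriv_neg (convex_Icc a b)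
    (hγc.mul (Real.continuous_exp.comp_continuousOn (hp.continuousOn_primitive_Icc hab).neg))
    fun t ht => ?_
  rw [interior_Icc] at ht
  have hderiv : HasDerivAt (fun t => γ t * Real.exp (-F t)) (q t * Real.exp (-F t)) t := by
    have hγt := (hγ t (Ioo_subset_Icc_self ht)).hasDerivAt (Icc_mem_nhds ht.1 ht.2)
    refine (hγt.mul (hp.hasDerivAt_primitive_of_mem_Ioo ht).fun_neg.exp).congr_deriv ?_
    ring
  rw [hderiv.deriv]
  exact mul_neg_of_neg_of_pos (hq t ht) (Real.exp_pos _)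

theorem pos_of_hasDerivWithinAt_linear_of_forcing_neg (hp : ContinuousOn p (Icc a b))
    (hq : ∀ t ∈ Ioo a b, q t < 0)
    (hγ : ∀ t ∈ Icc a b, HasDerivWithinAt γ (p t * γ t + q t) (Icc a b) t) (hγb : 0 ≤ γ b) :
    ∀ t ∈ Ico a b, 0 < γ t := by
  intro t ht
  have hab : a ≤ b := ht.1.trans ht.2.le
  have hdecr := strictAntiOn_mul_exp_neg_primitive hab hp hq hγ ⟨ht.1, ht.2.le⟩
    (right_mem_Icc.mpr hab) ht.2
  have hend_nonneg : 0 ≤ γ b * Real.exp (-∫ s in a..b, p s) := mul_nonneg hγb (Real.exp_pos _).le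
  exact pos_of_mul_pos_left (hend_nonneg.trans_lt hdecr) (Real.exp_pos _).le

theorem stmt_15_general (a₁ a₂ T : ℝ) (ha₂ : 0 < a₂)
    (m γ : ℝ → ℝ)
    (hmc : ContinuousOn m (Icc 0 T))
    (hm : ∀ t ∈ Icc 0 T, 0 < m t)
    (hγ : ∀ t ∈ Icc 0 T,
      HasDerivWithinAt γ (m t * ((a₂ - a₁) * γ t - a₂)) (Icc 0 T) t)
    (hγT : γ T = 0) :
    ∀ t ∈ Ico 0 T, 0 < γ t := by
  refine pos_of_hasDerivWithinAt_linear_of_forcing_neg (p := fun t => m t * (a₂ - a₁))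
    (q := fun t => -(m t * a₂)) (hmc.mul continuousOn_const) (fun t ht => ?_) (fun t ht => ?_)
    hγT.ge
  · exact neg_neg_of_pos (mul_pos (hm t (Ioo_subset_Icc_self ht)) ha₂)
  · convert hγ t ht using 1
    ring

/-- The adjoint ratio `γ` of the two-compartment problem, solving
`γ' = m((a₂ - a₁)γ - a₂)` with `γ(T) = 0`, is positive on `[0, T)`. -/
theorem stmt_15 (a₁ a₂ T : ℝ) (ha₁ : 0 < a₁) (ha₂ : 0 < a₂) (hT : 0 < T)
    (m γ : ℝ → ℝ)
    (hmc : ContinuousOn m (Icc 0 T))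
    (hm : ∀ t ∈ Icc 0 T, 0 < m t)
    (hγ : ∀ t ∈ Icc 0 T,
      HasDerivWithinAt γ (m t * ((a₂ - a₁) * γ t - a₂)) (Icc 0 T) t)
    (hγT : γ T = 0) :
    ∀ t ∈ Ico 0 T, 0 < γ t :=
  stmt_15_general a₁ a₂ T ha₂ m γ hmc hm hγ hγT
end

section
/- Let μ : ℝ → ℝ be twice differentiable with μ(0) = 0, μ'(s) > 0 and μ''(s) ≤ 0 for all s ≥ 0, and let β > 0 and S̲ > 0. Then the equation μ(s) = β·μ'(s)·(S̲ − s) has exactly one solution s̄ in the open interval (0, S̲). -/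
open Set

/-!
Writing the equation as `F s = 0` with `F s = μ s - β μ'(s) (S̲ - s)`, we have
`F' = (1 + β) μ' - β μ'' (S̲ - ·) > 0` on `(0, S̲)`, so `F` is strictly increasing on `[0, S̲]`.
Since `F 0 = -β μ'(0) S̲ < 0` and `F S̲ = μ S̲ > μ 0 = 0`, the intermediate value theorem gives
exactly one zero in `(0, S̲)`.
-/

theorem existsUnique_mem_Ioo_eq_zero_of_strictMonoOn {f : ℝ → ℝ} {a b : ℝ} (hab : a ≤ b)
    (hf : ContinuousOn f (Icc a b)) (hmono : StrictMonoOn f (Icc a b))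
    (ha : f a < 0) (hb : 0 < f b) : ∃! x, x ∈ Ioo a b ∧ f x = 0 := by
  obtain ⟨x, hx, hfx⟩ := intermediate_value_Ioo hab hf ⟨ha, hb⟩
  refine ⟨x, ⟨hx, hfx⟩, fun y ⟨hy, hfy⟩ => ?_⟩
  exact hmono.injOn (Ioo_subset_Icc_self hy) (Ioo_subset_Icc_self hx) (hfy.trans hfx.symm)

def thresholdResidual (μ μ' : ℝ → ℝ) (β S s : ℝ) : ℝ :=
  μ s - β * μ' s * (S - s)

section thresholdResidual

variable {μ μ' μ'' : ℝ → ℝ} {β S : ℝ}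

theorem hasDerivAt_thresholdResidual {s : ℝ} (h₁ : HasDerivAt μ (μ' s) s)
    (h₂ : HasDerivAt μ' (μ'' s) s) :
    HasDerivAt (thresholdResidual μ μ' β S) ((1 + β) * μ' s - β * μ'' s * (S - s)) s := by
  have h := h₁.sub ((h₂.const_mul β).mul ((hasDerivAt_const s S).sub (hasDerivAt_id s)))
  exact h.congr_deriv (by simp only [Pi.sub_apply, id_eq]; ring)

theorem strictMonoOn_thresholdResidual (hd1 : ∀ s, HasDerivAt μ (μ' s) s)
    (hd2 : ∀ s, HasDerivAt μ' (μ'' s) s) (hμ' : ∀ s ∈ Ioo 0 S, 0 < μ' s)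
    (hμ'' : ∀ s ∈ Ioo 0 S, μ'' s ≤ 0) (hβ : 0 ≤ β) :
    StrictMonoOn (thresholdResidual μ μ' β S) (Icc 0 S) := by
  have hF s := hasDerivAt_thresholdResidual (β := β) (S := S) (hd1 s) (hd2 s)
  refine strictMonoOn_of_deriv_pos (convex_Icc 0 S)
    (fun s _ => (hF s).continuousAt.continuousWithinAt) fun s hs => ?_
  rw [interior_Icc] at hs
  rw [(hF s).deriv]
  have hconcave : 0 ≤ β * (-μ'' s * (S - s)) :=
    mul_nonneg hβ (mul_nonneg (neg_nonneg.2 (hμ'' s hs)) (sub_pos.2 hs.2).le)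
  nlinarith [hμ' s hs]

end thresholdResidual

/-- The threshold equation `μ(s) = β μ'(s)(S̲ - s)` has exactly one solution
in `(0, S̲)`. -/
theorem stmt_16 (μ μ' μ'' : ℝ → ℝ)
    (hd1 : ∀ s, HasDerivAt μ (μ' s) s)
    (hd2 : ∀ s, HasDerivAt μ' (μ'' s) s)
    (hμ0 : μ 0 = 0)
    (hμ' : ∀ s ≥ (0 : ℝ), 0 < μ' s)
    (hμ'' : ∀ s ≥ (0 : ℝ), μ'' s ≤ 0)
    (β Sbar : ℝ) (hβ : 0 < β) (hSbar : 0 < Sbar) :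
    ∃! s : ℝ, s ∈ Ioo 0 Sbar ∧ μ s = β * μ' s * (Sbar - s) := by
  have hμ_mono : StrictMonoOn μ (Ici 0) :=
    strictMonoOn_of_deriv_pos (convex_Ici 0)
      (fun s _ => (hd1 s).continuousAt.continuousWithinAt) fun s hs => by
        rw [interior_Ici] at hs
        exact (hd1 s).deriv ▸ hμ' s hs.le
  have hF0 : thresholdResidual μ μ' β Sbar 0 < 0 := by
    simp only [thresholdResidual, hμ0, sub_zero, zero_sub, neg_neg_iff_pos]
    exact mul_pos (mul_pos hβ (hμ' 0 le_rfl)) hSbar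
  have hFS : 0 < thresholdResidual μ μ' β Sbar Sbar := by
    simpa only [thresholdResidual, sub_self, mul_zero, sub_zero, hμ0] using
      hμ_mono self_mem_Ici hSbar.le hSbar
  have hmono : StrictMonoOn (thresholdResidual μ μ' β Sbar) (Icc 0 Sbar) :=
    strictMonoOn_thresholdResidual hd1 hd2 (fun s hs => hμ' s hs.1.le)
      (fun s hs => hμ'' s hs.1.le) hβ.le
  have hcont : ContinuousOn (thresholdResidual μ μ' β Sbar) (Icc 0 Sbar) := fun s _ =>
    (hasDerivAt_thresholdResidual (hd1 s) (hd2 s)).continuousAt.continuousWithinAt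
  simpa only [thresholdResidual, sub_eq_zero] using
    existsUnique_mem_Ioo_eq_zero_of_strictMonoOn hSbar.le hcont hmono hF0 hFS
end

section
/- Let μ_max > 0, K > 0, β > 0 and S̲ > 0, and define the Monod law μ(s) = μ_max·s/(K + s). Then s̄ = (−K(1+β) + √(K²(1+β)² + 4KβS̲))/2 lies in (0, S̲) and satisfies μ(s̄) = β·μ'(s̄)·(S̲ − s̄); moreover it is the unique solution of this equation in (0, S̲). -/
open Set

/-! The threshold equation for the Monod law clears denominators to the quadratic
`s² + K(1+β)s − KβS̲ = 0`, whose roots have product `−KβS̲ < 0`: exactly one is positive, namely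
`s̄`, and it lies below `S̲` because the quadratic is already positive at `S̲`. -/

theorem hasDerivAt_monod (μmax K s : ℝ) (hs : K + s ≠ 0) :
    HasDerivAt (fun s => μmax * s / (K + s)) (μmax * K / (K + s) ^ 2) s :=
  (((hasDerivAt_id' s).const_mul μmax).fun_div ((hasDerivAt_id' s).const_add K) hs).congr_deriv
    (by ring)

theorem monod_threshold_iff_quadratic {μmax K β S s : ℝ} (hμmax : μmax ≠ 0) (hs : K + s ≠ 0) :
    μmax * s / (K + s) = β * deriv (fun s => μmax * s / (K + s)) s * (S - s) ↔
      1 * (s * s) + K * (1 + β) * s + -(K * β * S) = 0 := by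
  rw [(hasDerivAt_monod μmax K s hs).deriv]
  have hfactor : μmax * s / (K + s) - β * (μmax * K / (K + s) ^ 2) * (S - s) =
      μmax / (K + s) ^ 2 * (1 * (s * s) + K * (1 + β) * s + -(K * β * S)) := by
    field_simp
    ring
  rw [← sub_eq_zero, hfactor, mul_eq_zero, or_iff_right (by positivity)]

theorem monod_threshold_root_mem_Ioo {K β S : ℝ} (hK : 0 < K) (hβ : 0 < β) (hS : 0 < S) :
    (-(K * (1 + β)) + Real.sqrt (K ^ 2 * (1 + β) ^ 2 + 4 * K * β * S)) / 2 ∈ Ioo 0 S := by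
  have hlower : K * (1 + β) < Real.sqrt (K ^ 2 * (1 + β) ^ 2 + 4 * K * β * S) := by
    apply Real.lt_sqrt_of_sq_lt
    nlinarith [mul_pos (mul_pos hK hβ) hS]
  have hupper : Real.sqrt (K ^ 2 * (1 + β) ^ 2 + 4 * K * β * S) < K * (1 + β) + 2 * S := by
    rw [Real.sqrt_lt' (by positivity)]
    nlinarith [mul_pos hK hS]
  constructor <;> linarith

/-- Monod law: explicit closed-form root of the threshold equation
`μ(s) = β μ'(s)(S̲ - s)` in `(0, S̲)`, and its uniqueness. -/
theorem stmt_17 (μmax K β Sbar : ℝ)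
    (hμmax : 0 < μmax) (hK : 0 < K) (hβ : 0 < β) (hSbar : 0 < Sbar)
    (μ : ℝ → ℝ) (hμ : μ = fun s => μmax * s / (K + s))
    (sbar : ℝ)
    (hsbar : sbar = (-(K * (1 + β)) +
      Real.sqrt (K ^ 2 * (1 + β) ^ 2 + 4 * K * β * Sbar)) / 2) :
    sbar ∈ Ioo 0 Sbar ∧
    μ sbar = β * deriv μ sbar * (Sbar - sbar) ∧
    ∀ s ∈ Ioo 0 Sbar, μ s = β * deriv μ s * (Sbar - s) → s = sbar := by
  subst hμ
  set r := Real.sqrt (K ^ 2 * (1 + β) ^ 2 + 4 * K * β * Sbar)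
  have hdiscrim : discrim 1 (K * (1 + β)) (-(K * β * Sbar)) = r * r := by
    rw [Real.mul_self_sqrt (by positivity), discrim]
    ring
  have hroots (s : ℝ) (hs : 0 < s) :
      μmax * s / (K + s) = β * deriv (fun s => μmax * s / (K + s)) s * (Sbar - s) ↔
        s = sbar ∨ s = (-(K * (1 + β)) - r) / 2 := by
    rw [monod_threshold_iff_quadratic hμmax.ne' (by positivity),
      quadratic_eq_zero_iff one_ne_zero hdiscrim, hsbar, mul_one]
  have hmem : sbar ∈ Ioo 0 Sbar := hsbar ▸ monod_threshold_root_mem_Ioo hK hβ hSbar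
  refine ⟨hmem, (hroots sbar hmem.1).2 (Or.inl rfl), fun s hs heq => ?_⟩
  have hr : 0 ≤ r := Real.sqrt_nonneg _
  exact ((hroots s hs.1).1 heq).resolve_right fun h => by nlinarith [hs.1]
end
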